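/- For every integer k ≥ 1, k + 1 = ∑_{n=k}^{∞} (-1)^{n-k} s(n,k) H_{n+1} / (n+1)!. -/

import Mathlib

open scoped BigOperators

noncomputable def stirlingS1 (n k : ℕ) : ℝ :=
  (∏ i ∈ Finset.range n, (Polynomial.X - Polynomial.C (i : ℝ))).coeff k

noncomputable def H (n : ℕ) : ℝ := ∑ j ∈ Finset.range n, 1 / (j + 1 : ℝ)

/-!
Write `L(t) = -log (1 - t)` and `c(n, k) = (-1)^(n+k) s(n, k)` (the unsigned Stirling numbers).
Their exponential generating function is `∑ₙ c(n, k) tⁿ / n! = L(t)^k / k!` on `[0, 1)`: by the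
recurrence, the termwise derivative of the series for `k + 1` is the series for `k` times
`1 / (1 - t)`, so the claim propagates in `k` by integrating termwise. On the other hand
`∫₀¹ tⁿ L(t) dt = H_{n+1} / (n + 1)`. Multiplying the generating function by `L` and
integrating over `(0, 1)` term by term (all terms are nonnegative) therefore turns the series
into `∫₀¹ L(t)^(k+1) dt / k! = (k + 1)! / k! = k + 1`, where the integral is `Γ(k + 2)` after
the substitution `t = 1 - e^(-s)`.
-/

open Real MeasureTheory Set
open scoped Nat

open Polynomial in
theorem stirlingS1_eq_neg_one_pow_mul_stirlingFirst (n k : ℕ) :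
    stirlingS1 n k = (-1) ^ (n + k) * Nat.stirlingFirst n k := by
  induction n generalizing k with
  | zero => cases k <;> simp [stirlingS1, coeff_one]
  | succ n ih =>
    have hcoeff : stirlingS1 (n + 1) k =
        (if k = 0 then 0 else stirlingS1 n (k - 1)) - n * stirlingS1 n k := by
      rw [stirlingS1, Finset.prod_range_succ, mul_sub, coeff_sub, coeff_mul_C, ← stirlingS1]
      cases k <;> simp [stirlingS1, mul_comm]
    cases k with
    | zero => cases n <;> simp [hcoeff, ih]
    | succ k =>
      rw [hcoeff, if_neg k.succ_ne_zero, Nat.add_sub_cancel, ih, ih, Nat.stirlingFirst_succ_succ]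
      push_cast
      ring

theorem stirlingFirst_succ_succ_div_factorial (n k : ℕ) :
    (Nat.stirlingFirst (n + 1) (k + 1) : ℝ) / n ! =
      ∑ i ∈ Finset.range (n + 1), (Nat.stirlingFirst i k : ℝ) / i ! := by
  induction n with
  | zero => simp [Nat.stirlingFirst_succ_succ]
  | succ n ih =>
    rw [Finset.sum_range_succ, ← ih, Nat.stirlingFirst_succ_succ, Nat.factorial_succ]
    push_cast
    field_simp

theorem hasSum_integral_of_nonneg {ι α : Type*} [Countable ι] [MeasurableSpace α]
    {μ : Measure α} {F : ι → α → ℝ} {f : α → ℝ}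
    (hF_meas : ∀ n, AEStronglyMeasurable (F n) μ) (hF_nonneg : ∀ n, 0 ≤ᵐ[μ] F n)
    (hf : Integrable f μ) (h_lim : ∀ᵐ a ∂μ, HasSum (fun n => F n a) (f a)) :
    HasSum (fun n => ∫ a, F n a ∂μ) (∫ a, f a ∂μ) := by
  refine hasSum_integral_of_dominated_convergence F hF_meas
    (fun n => (hF_nonneg n).mono fun a ha => (Real.norm_of_nonneg ha).le)
    (h_lim.mono fun a ha => ha.summable) (hf.congr ?_) h_lim
  exact h_lim.mono fun a ha => ha.tsum_eq.symm

theorem HasSum.sum_range_succ_mul_pow {𝕜 : Type*} [NormedField 𝕜] [CompleteSpace 𝕜]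
    {a : ℕ → 𝕜} {A x : 𝕜} (h : HasSum (fun n => a n * x ^ n) A)
    (h_norm : Summable fun n => ‖a n * x ^ n‖) (hx : ‖x‖ < 1) :
    HasSum (fun n => (∑ i ∈ Finset.range (n + 1), a i) * x ^ n) (A / (1 - x)) := by
  have hgeom : Summable fun n => ‖x ^ n‖ := by
    simpa [norm_pow] using summable_geometric_of_lt_one (norm_nonneg x) hx
  have := hasSum_sum_range_mul_of_summable_norm h_norm hgeom
  rw [h.tsum_eq, tsum_geometric_of_norm_lt_one hx, ← div_eq_mul_inv] at this
  refine this.congr_fun fun n => ?_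
  rw [Finset.sum_mul]
  refine Finset.sum_congr rfl fun i hi => ?_
  rw [mul_assoc, ← pow_add, Nat.add_sub_cancel' (Nat.lt_succ_iff.mp (Finset.mem_range.mp hi))]

theorem hasDerivAt_neg_log_one_sub {t : ℝ} (ht : t ≠ 1) :
    HasDerivAt (fun t => -log (1 - t)) (1 / (1 - t)) t := by
  have := (((hasDerivAt_id t).const_sub 1).log (sub_ne_zero.mpr ht.symm)).fun_neg
  simpa [neg_div] using this

theorem hasDerivAt_neg_log_one_sub_pow_div_factorial (m : ℕ) {t : ℝ} (ht : t ≠ 1) :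
    HasDerivAt (fun t => (-log (1 - t)) ^ (m + 1) / (m + 1)!)
      ((-log (1 - t)) ^ m / m ! / (1 - t)) t := by
  refine (((hasDerivAt_neg_log_one_sub ht).fun_pow (m + 1)).div_const ((m + 1)! : ℝ)).congr_deriv
    ?_
  rw [Nat.factorial_succ]
  push_cast
  field_simp

theorem continuousOn_neg_log_one_sub_pow_div_factorial_div (m : ℕ) {x : ℝ} (hx1 : x < 1) :
    ContinuousOn (fun t => (-log (1 - t)) ^ m / m ! / (1 - t)) (Iic x) := by
  have hne : ∀ t ∈ Iic x, 1 - t ≠ 0 := fun t ht => by linarith [mem_Iic.mp ht]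
  have h1 : ContinuousOn (fun t : ℝ => 1 - t) (Iic x) := by fun_prop
  exact (((h1.log hne).neg.pow m).div_const _).div h1 hne

theorem integral_neg_log_one_sub_pow_div_factorial (m : ℕ) {x : ℝ} (hx0 : 0 ≤ x) (hx1 : x < 1) :
    ∫ t in Ioo 0 x, (-log (1 - t)) ^ m / m ! / (1 - t) =
      (-log (1 - x)) ^ (m + 1) / (m + 1)! := by
  have hcont : ContinuousOn (fun t => (-log (1 - t)) ^ m / m ! / (1 - t)) (uIcc 0 x) :=
    (continuousOn_neg_log_one_sub_pow_div_factorial_div m hx1).mono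
      (by rw [uIcc_of_le hx0]; exact Set.Icc_subset_Iic_self)
  rw [← integral_Ioc_eq_integral_Ioo, ← intervalIntegral.integral_of_le hx0,
    intervalIntegral.integral_eq_sub_of_hasDerivAt
      (fun t ht => hasDerivAt_neg_log_one_sub_pow_div_factorial m ?_) hcont.intervalIntegrable]
  · simp
  · rw [uIcc_of_le hx0] at ht; linarith [ht.2]

theorem hasSum_stirlingFirst_mul_pow_div_factorial (k : ℕ) {x : ℝ} (hx0 : 0 ≤ x)
    (hx1 : x < 1) :
    HasSum (fun n => (Nat.stirlingFirst n k : ℝ) * x ^ n / n !) ((-log (1 - x)) ^ k / k !) := by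
  induction k generalizing x with
  | zero =>
    convert hasSum_single (f := fun n => (Nat.stirlingFirst n 0 : ℝ) * x ^ n / n !) 0
      (fun n hn => by obtain ⟨n, rfl⟩ := Nat.exists_eq_succ_of_ne_zero hn; simp) using 1
    simp
  | succ k ih =>
    have h_deriv : ∀ t ∈ Ioo 0 x, HasSum
        (fun n => (Nat.stirlingFirst (n + 1) (k + 1) : ℝ) / n ! * t ^ n)
        ((-log (1 - t)) ^ k / k ! / (1 - t)) := fun t ht => by
      have ht1 : t < 1 := ht.2.trans hx1
      have hk := ih ht.1.le ht1
      have h_norm : Summable fun n => ‖(Nat.stirlingFirst n k : ℝ) / n ! * t ^ n‖ := by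
        refine hk.summable.congr fun n => ?_
        rw [Real.norm_of_nonneg (by have := ht.1.le; positivity)]
        ring
      simp_rw [stirlingFirst_succ_succ_div_factorial]
      refine HasSum.sum_range_succ_mul_pow ?_ h_norm ?_
      · exact hk.congr_fun fun n => by ring
      · rw [Real.norm_of_nonneg ht.1.le]; exact ht1
    have h_int : ∀ n, ∫ t in Ioo 0 x, (Nat.stirlingFirst (n + 1) (k + 1) : ℝ) / n ! * t ^ n =
        (Nat.stirlingFirst (n + 1) (k + 1) : ℝ) * x ^ (n + 1) / (n + 1)! := fun n => by
      rw [← integral_Ioc_eq_integral_Ioo, ← intervalIntegral.integral_of_le hx0,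
        intervalIntegral.integral_const_mul, integral_pow, Nat.factorial_succ]
      push_cast
      field_simp
      ring
    have h_sum := hasSum_integral_of_nonneg (μ := volume.restrict (Ioo 0 x))
      (fun n => Continuous.aestronglyMeasurable (by fun_prop))
      (fun n => (ae_restrict_mem measurableSet_Ioo).mono fun t ht => by
        have := ht.1.le; positivity)
      ?_ ((ae_restrict_mem measurableSet_Ioo).mono h_deriv)
    · rw [integral_neg_log_one_sub_pow_div_factorial k hx0 hx1] at h_sum
      simp_rw [h_int] at h_sum
      exact (hasSum_nat_add_iff' 1).mp (by simpa using h_sum)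
    · exact ((continuousOn_neg_log_one_sub_pow_div_factorial_div k hx1).mono
        Set.Icc_subset_Iic_self |>.integrableOn_Icc).mono_set Ioo_subset_Icc_self

theorem integral_exp_neg_mul_pow (m : ℕ) :
    IntegrableOn (fun s => exp (-s) * s ^ m) (Ioi 0) ∧
      ∫ s in Ioi 0, exp (-s) * s ^ m = m ! := by
  have hm : (0 : ℝ) < m + 1 := by positivity
  have h_rpow : ∀ s ∈ Ioi (0 : ℝ), exp (-s) * s ^ ((m + 1 : ℝ) - 1) = exp (-s) * s ^ m :=
    fun s _ => by rw [add_sub_cancel_right, rpow_natCast]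
  refine ⟨(GammaIntegral_convergent hm).congr_fun h_rpow measurableSet_Ioi, ?_⟩
  rw [← setIntegral_congr_fun measurableSet_Ioi h_rpow, ← Gamma_eq_integral hm,
    Gamma_nat_eq_factorial]

theorem integral_neg_log_one_sub_pow (m : ℕ) :
    IntegrableOn (fun t => (-log (1 - t)) ^ m) (Ioo 0 1) ∧
      ∫ t in Ioo 0 1, (-log (1 - t)) ^ m = m ! := by
  set g : ℝ → ℝ := fun s => 1 - exp (-s)
  have h_image : g '' Ioi 0 = Ioo 0 1 := by
    ext t
    refine ⟨?_, fun ht => ⟨-log (1 - t), ?_, ?_⟩⟩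
    · rintro ⟨s, hs, rfl⟩
      have : exp (-s) < 1 := exp_lt_one_iff.mpr (by linarith [mem_Ioi.mp hs])
      exact ⟨by simp [g, this], by simp [g, exp_pos]⟩
    · simpa using log_neg (by linarith [ht.2]) (by linarith [ht.1])
    · simp [g, exp_log (by linarith [ht.2] : 0 < 1 - t)]
  have h_deriv : ∀ s ∈ Ioi (0 : ℝ), HasDerivWithinAt g (exp (-s)) (Ioi 0) s := fun s _ => by
    simpa using (((hasDerivAt_neg s).exp).const_sub 1).hasDerivWithinAt
  have h_inj : InjOn g (Ioi 0) := fun a _ b _ h => by simpa [g] using h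
  have h_comp : (fun s => |exp (-s)| • (-log (1 - g s)) ^ m) = fun s => exp (-s) * s ^ m := by
    ext s
    simp [g, abs_of_pos (exp_pos _)]
  constructor
  · rw [← h_image, integrableOn_image_iff_integrableOn_abs_deriv_smul measurableSet_Ioi h_deriv
      h_inj, h_comp]
    exact (integral_exp_neg_mul_pow m).1
  · rw [← h_image, integral_image_eq_integral_abs_deriv_smul measurableSet_Ioi h_deriv h_inj,
      h_comp]
    exact (integral_exp_neg_mul_pow m).2

theorem integral_pow_mul_neg_log_one_sub (n : ℕ) :
    ∫ t in Ioo 0 1, t ^ n * -log (1 - t) = H (n + 1) / (n + 1) := by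
  have hL : IntervalIntegrable (fun t => -log (1 - t)) volume 0 1 := by
    have := (intervalIntegral.intervalIntegrable_log' (a := 1) (b := 0)).comp_sub_left 1
    exact (by simpa using this : IntervalIntegrable (fun t => log (1 - t)) volume 0 1).neg
  have h_int : IntervalIntegrable (fun t => t ^ n * -log (1 - t)) volume 0 1 :=
    hL.continuousOn_mul (by fun_prop)
  have h_geom : IntervalIntegrable (fun t : ℝ => ∑ i ∈ Finset.range (n + 1), t ^ i) volume 0 1 :=
    (by fun_prop : Continuous _).intervalIntegrable _ _
  -- `(tⁿ⁺¹ - 1) (-log (1 - t)) = (∑_{i ≤ n} tⁱ) ((1 - t) log (1 - t))` is an antiderivative of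
  -- the integrand, and it is continuous on `[0, 1]` and vanishes at both ends.
  have h_ftc : ∫ t in (0)..1,
      ((n + 1) * (t ^ n * -log (1 - t)) - ∑ i ∈ Finset.range (n + 1), t ^ i) = 0 := by
    have h_cont : Continuous fun t : ℝ => (t ^ (n + 1) - 1) * -log (1 - t) := by
      have : (fun t : ℝ => (t ^ (n + 1) - 1) * -log (1 - t)) =
          fun t => (∑ i ∈ Finset.range (n + 1), t ^ i) * ((1 - t) * log (1 - t)) := by
        ext t
        rw [← mul_assoc, mul_comm _ (1 - t), mul_neg_geom_sum]
        ring
      rw [this]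
      exact (by fun_prop : Continuous _).mul (continuous_mul_log.comp (by fun_prop))
    rw [intervalIntegral.integral_eq_sub_of_hasDerivAt_of_le zero_le_one h_cont.continuousOn
      (fun t ht => ?_) ((h_int.const_mul _).sub h_geom)]
    · simp
    · have h1t : 1 - t ≠ 0 := by linarith [ht.2]
      have h_pow : HasDerivAt (fun t : ℝ => t ^ (n + 1) - 1) ((n + 1) * t ^ n) t := by
        simpa using (hasDerivAt_pow (n + 1) t).sub_const 1
      refine (h_pow.mul (hasDerivAt_neg_log_one_sub (by linarith [ht.2]))).congr_deriv ?_
      have h_geom := mul_neg_geom_sum t (n + 1)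
      field_simp
      linear_combination h_geom
  rw [intervalIntegral.integral_sub (h_int.const_mul _) h_geom,
    intervalIntegral.integral_const_mul, sub_eq_zero,
    intervalIntegral.integral_finsetSum fun i _ => (continuous_pow i).intervalIntegrable _ _]
    at h_ftc
  rw [← integral_Ioc_eq_integral_Ioo, ← intervalIntegral.integral_of_le zero_le_one,
    eq_div_iff (by positivity), mul_comm, h_ftc]
  simp [H]

theorem hasSum_stirlingFirst_mul_harmonic_div_factorial (k : ℕ) :
    HasSum (fun n => (Nat.stirlingFirst n k : ℝ) * H (n + 1) / (n + 1)!) (k + 1) := by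
  have h_sum := hasSum_integral_of_nonneg (μ := volume.restrict (Ioo 0 1))
    (F := fun n t => (Nat.stirlingFirst n k : ℝ) / n ! * (t ^ n * -log (1 - t)))
    (f := fun t => (-log (1 - t)) ^ (k + 1) / k !)
    (fun n => (by fun_prop : Measurable _).aestronglyMeasurable)
    (fun n => (ae_restrict_mem measurableSet_Ioo).mono fun t ht => by
      have : 0 ≤ -log (1 - t) :=
        neg_nonneg.mpr (log_nonpos (by linarith [ht.2]) (by linarith [ht.1]))
      have := ht.1.le
      positivity)
    ((integral_neg_log_one_sub_pow (k + 1)).1.div_const _)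
    ((ae_restrict_mem measurableSet_Ioo).mono fun t ht => by
      have h := (hasSum_stirlingFirst_mul_pow_div_factorial k ht.1.le ht.2).mul_right
        (-log (1 - t))
      rw [div_mul_eq_mul_div, ← pow_succ] at h
      exact h.congr_fun fun n => by ring)
  simp only [integral_const_mul, integral_pow_mul_neg_log_one_sub, integral_div,
    (integral_neg_log_one_sub_pow (k + 1)).2] at h_sum
  convert h_sum using 1
  · ext n
    rw [Nat.factorial_succ]
    push_cast
    field_simp
  · rw [Nat.factorial_succ]
    push_cast
    field_simp

theorem succ_eq_stirling_harmonic_series_general (k : ℕ) :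
    (k : ℝ) + 1 =
      ∑' n : ℕ, (-1) ^ n * stirlingS1 (n + k) k * H (n + k + 1) /
        (Nat.factorial (n + k + 1)) := by
  have h := (hasSum_nat_add_iff' k).mpr (hasSum_stirlingFirst_mul_harmonic_div_factorial k)
  rw [Finset.sum_eq_zero fun i hi => by
    simp [Nat.stirlingFirst_eq_zero_of_lt (Finset.mem_range.mp hi)], sub_zero] at h
  refine (h.congr_fun fun n => ?_).tsum_eq.symm
  rw [stirlingS1_eq_neg_one_pow_mul_stirlingFirst, ← mul_assoc, ← pow_add,
    show n + (n + k + k) = 2 * (n + k) by ring, pow_mul]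
  simp

theorem succ_eq_stirling_harmonic_series (k : ℕ) (hk : 1 ≤ k) :
    (k : ℝ) + 1 =
      ∑' n : ℕ, (-1) ^ n * stirlingS1 (n + k) k * H (n + k + 1) /
        (Nat.factorial (n + k + 1)) :=
  succ_eq_stirling_harmonic_series_general k
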